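/- Let T_N be negative binomial with parameters N ≥ 1 and p ∈ (0,1). Then E[(N/(T_N + N))^2] = p^N · ₃F₂(N, N, N; N+1, N+1; 1-p), where ₃F₂ is the generalized hypergeometric function. -/

import Mathlib

/-- The Pochhammer symbol (rising factorial) `(x)ₙ = x(x+1)⋯(x+n-1)`. -/
noncomputable def poch (x : ℝ) (n : ℕ) : ℝ := ∏ i ∈ Finset.range n, (x + i)

/-- The generalized hypergeometric series `₃F₂(a₁, a₂, a₃; b₁, b₂; z)`. -/
noncomputable def hyp3F2 (a₁ a₂ a₃ b₁ b₂ z : ℝ) : ℝ :=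
  ∑' n : ℕ, poch a₁ n * poch a₂ n * poch a₃ n / (poch b₁ n * poch b₂ n * n.factorial) * z ^ n

/-!
Both sides are series in `(1 - p)^t`, and they agree term by term. Since
`N · (N+1)ₜ = (N)ₜ · (N+t)`, the `t`-th hypergeometric coefficient
`(N)ₜ³ / ((N+1)ₜ² t!)` equals `(N/(N+t))² · (N)ₜ / t!`, and `(N)ₜ / t! = C(t+N-1, N-1)`
is the negative binomial coefficient.
-/

lemma poch_succ (x : ℝ) (n : ℕ) : poch x (n + 1) = poch x n * (x + n) :=
  Finset.prod_range_succ _ _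

lemma poch_succ' (x : ℝ) (n : ℕ) : poch x (n + 1) = x * poch (x + 1) n := by
  simp only [poch, Finset.prod_range_succ', Nat.cast_add, Nat.cast_one, Nat.cast_zero, add_zero]
  rw [mul_comm]
  simp only [add_assoc, add_comm (1 : ℝ)]

lemma poch_pos {x : ℝ} (hx : 0 < x) (n : ℕ) : 0 < poch x n :=
  Finset.prod_pos fun i _ => by positivity

lemma poch_natCast (a n : ℕ) : poch a n = a.ascFactorial n := by
  rw [poch, Nat.ascFactorial_eq_prod_range]
  push_cast
  rfl

lemma poch_natCast_div_factorial {N : ℕ} (hN : 1 ≤ N) (t : ℕ) :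
    poch N t / t.factorial = (t + N - 1).choose (N - 1) := by
  have hsymm : (t + N - 1).choose (N - 1) = (N + t - 1).choose t := by
    obtain ⟨M, rfl⟩ := Nat.exists_eq_add_of_le' hN
    simpa [Nat.add_right_comm t M 1, Nat.add_comm t M] using Nat.choose_symm_add
  rw [poch_natCast, Nat.ascFactorial_eq_factorial_mul_choose', hsymm, Nat.cast_mul,
    mul_div_cancel_left₀ _ (by positivity)]

lemma poch_cube_div_poch_add_one_sq {x : ℝ} (hx : 0 < x) (n : ℕ) :
    poch x n * poch x n * poch x n / (poch (x + 1) n * poch (x + 1) n * n.factorial)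
      = (x / (n + x)) ^ 2 * (poch x n / n.factorial) := by
  have hshift : poch (x + 1) n = poch x n * (x + n) / x := by
    rw [eq_div_iff hx.ne', mul_comm, ← poch_succ', poch_succ]
  have := poch_pos hx n
  rw [hshift]
  field_simp
  ring

theorem ml_estimator_second_moment_general (N : ℕ) (hN : 1 ≤ N) (p : ℝ) :
    (∑' t : ℕ, ((N : ℝ) / (t + N)) ^ 2 *
        (((t + N - 1).choose (N - 1) : ℝ) * p ^ N * (1 - p) ^ t))
      = p ^ N * hyp3F2 N N N (N + 1) (N + 1) (1 - p) := by
  rw [hyp3F2, ← tsum_mul_left]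
  refine tsum_congr fun t => ?_
  rw [poch_cube_div_poch_add_one_sq (by exact_mod_cast hN) t, poch_natCast_div_factorial hN t]
  ring

/-- Second moment of the ML estimator: for `T_N` negative binomial with
parameters `N ≥ 1` and `p ∈ (0,1)`,
`E[(N/(T_N+N))²] = p^N · ₃F₂(N, N, N; N+1, N+1; 1-p)`. -/
theorem ml_estimator_second_moment (N : ℕ) (hN : 1 ≤ N) (p : ℝ)
    (hp : 0 < p) (hp1 : p < 1) :
    (∑' t : ℕ, ((N : ℝ) / (t + N)) ^ 2 *
        (((t + N - 1).choose (N - 1) : ℝ) * p ^ N * (1 - p) ^ t))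
      = p ^ N * hyp3F2 N N N (N + 1) (N + 1) (1 - p) :=
  ml_estimator_second_moment_general N hN p
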